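/- Let H be a finite abelian group and ρ : H^{k+1} → ℤ^d a (full) k-cocycle, meaning ρ(c) = ρ(c^u) − ρ(c_u) for all cubes c ∈ H^{k+1}, directions 1 ≤ i ≤ k, and u ∈ H. Then the function λ(x) = E_{h∈H^k} ρ(x; h) (with values in ℝ^d) satisfies ∂λ(c) = ρ(c) for every cube c ∈ H^{k+1}. -/

import Mathlib

open Finset BigOperators

/-- Discrete derivative on a k-dimensional cube (x; h₁,...,h_k):
∂f(c) = Σ_{ω∈{0,1}^k} (−1)^{|ω|} f(x + ω·h). -/
def cder {H A : Type*} [AddCommGroup H] [AddCommGroup A] {k : ℕ}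
    (f : H → A) (x : H) (h : Fin k → H) : A :=
  ∑ ω : Fin k → Bool,
    ((-1 : ℤ) ^ (Finset.univ.filter fun i => ω i).card) •
      f (x + ∑ i : Fin k, if ω i then h i else 0)

/-!
Write `Λ y = ∑ t, ρ y t`. Peeling off the first direction of the cube gives
`∂Λ(x; h₀, h) = ∂Λ(x; h) - ∂Λ(x + h₀; h)`, and `σ y h = ∑ a, ρ y (a, h)` is again a cocycle in the
remaining directions with `Λ y = ∑ t, σ y t`. By induction on the dimension the right-hand side is
`|H|^k (σ x h - σ (x + h₀) h)`, and summing the cocycle identity in the first direction over `u ∈ H`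
turns this difference into `|H| ρ(x; h₀, h)`. Thus `∂Λ = |H|^k ρ` with values in any abelian group,
and only the final normalisation needs `ℝ`.
-/

theorem Fintype.sum_fin_succ_pi {n : ℕ} {β M : Type*} [Fintype β] [AddCommMonoid M]
    (F : (Fin (n + 1) → β) → M) : ∑ f, F f = ∑ f : Fin n → β, ∑ a, F (Fin.cons a f) := by
  rw [← (Fin.consEquiv fun _ => β).sum_comp, Fintype.sum_prod_type_right]
  rfl

section Cocycle

variable {H M : Type*} [AddCommGroup H] [AddCommGroup M]

/-- `ρ c = ρ c^u - ρ c_u` for every cube `c`, direction `i` and `u ∈ H`. -/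
def IsCubeCocycle {k : ℕ} (ρ : H → (Fin k → H) → M) : Prop :=
  ∀ (x : H) (h : Fin k → H) (i : Fin k) (u : H),
    ρ x h = ρ x (Function.update h i (h i + u)) - ρ (x + h i) (Function.update h i u)

theorem cder_zero (f : H → M) (x : H) (h : Fin 0 → H) : cder f x h = f x := by
  simp [cder]

theorem cder_cons {k : ℕ} (f : H → M) (x h₀ : H) (h : Fin k → H) :
    cder f x (Fin.cons h₀ h) = cder f x h - cder f (x + h₀) h := by
  rw [cder, cder, cder, ← Finset.sum_sub_distrib, Fintype.sum_fin_succ_pi]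
  refine Finset.sum_congr rfl fun ω _ => ?_
  simp only [Fintype.sum_bool, Finset.card_filter, Fin.sum_univ_succ, Fin.cons_zero,
    Fin.cons_succ, ite_true, Bool.false_eq_true, ite_false, zero_add, pow_add, pow_zero, one_mul,
    pow_one, neg_one_mul, neg_smul, add_assoc]
  abel

theorem cder_smul {R : Type*} [Monoid R] [DistribMulAction R M] {k : ℕ} (c : R) (f : H → M)
    (x : H) (h : Fin k → H) : cder (c • f) x h = c • cder f x h := by
  simp only [cder, Finset.smul_sum, Pi.smul_apply, smul_comm c]

variable [Fintype H]

theorem IsCubeCocycle.sum_update_sub {k : ℕ} {ρ : H → (Fin k → H) → M} (hρ : IsCubeCocycle ρ)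
    (x : H) (h : Fin k → H) (i : Fin k) :
    ∑ u, (ρ x (Function.update h i u) - ρ (x + h i) (Function.update h i u))
      = Fintype.card H • ρ x h := by
  -- reindex the first sum by `u ↦ h i + u`, so that each term is the cocycle identity
  rw [Finset.sum_sub_distrib, ← Fintype.sum_equiv (Equiv.addLeft (h i)) _ _ fun _ => rfl,
    ← Finset.sum_sub_distrib]
  simp [← hρ x h i]

theorem IsCubeCocycle.sum_cons {k : ℕ} {ρ : H → (Fin (k + 1) → H) → M} (hρ : IsCubeCocycle ρ) :
    IsCubeCocycle fun x h => ∑ a, ρ x (Fin.cons a h) := by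
  intro x h i u
  simp only [Fin.cons_update, ← Finset.sum_sub_distrib]
  refine Finset.sum_congr rfl fun a _ => ?_
  simpa using hρ x (Fin.cons a h) i.succ u

theorem IsCubeCocycle.cder_sum {k : ℕ} {ρ : H → (Fin k → H) → M} (hρ : IsCubeCocycle ρ)
    (x : H) (h : Fin k → H) :
    cder (fun y => ∑ t, ρ y t) x h = Fintype.card H ^ k • ρ x h := by
  induction k generalizing x with
  | zero => simp [cder_zero, Subsingleton.elim _ h]
  | succ k ih =>
    refine Fin.consCases (fun h₀ h => ?_) h
    simp only [Fintype.sum_fin_succ_pi (F := ρ _), cder_cons, ih hρ.sum_cons, ← smul_sub,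
      ← Finset.sum_sub_distrib]
    have := hρ.sum_update_sub x (Fin.cons h₀ h) 0
    simp only [Fin.update_cons_zero, Fin.cons_zero] at this
    rw [this, pow_succ, mul_smul]

end Cocycle

theorem cocycle_is_derivative_general {H : Type*} [AddCommGroup H] [Fintype H]
    {k d : ℕ} (ρ : H → (Fin k → H) → (Fin d → ℤ))
    (hcocycle : ∀ (x : H) (h : Fin k → H) (i : Fin k) (u : H),
      ρ x h = ρ x (Function.update h i (h i + u)) - ρ (x + h i) (Function.update h i u)) :
    ∀ (x : H) (h : Fin k → H),
      cder (fun y j => (∑ t : Fin k → H, (ρ y t j : ℝ)) / (Fintype.card H : ℝ) ^ k) x h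
        = fun j => (ρ x h j : ℝ) := by
  intro x h
  have hρ : IsCubeCocycle fun y t j => (ρ y t j : ℝ) := fun y t i u => by
    ext j
    simpa using congrArg (fun v => (v j : ℝ)) (hcocycle y t i u)
  have hN : (Fintype.card H : ℝ) ^ k ≠ 0 := by positivity
  have hmean : (fun y j => (∑ t : Fin k → H, (ρ y t j : ℝ)) / (Fintype.card H : ℝ) ^ k)
      = ((Fintype.card H : ℝ) ^ k)⁻¹ • fun y => ∑ t, fun j => (ρ y t j : ℝ) := by
    ext y j
    simp [Finset.sum_apply, div_eq_inv_mul]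
  rw [hmean, cder_smul, hρ.cder_sum, ← Nat.cast_smul_eq_nsmul ℝ, smul_smul, Nat.cast_pow,
    inv_mul_cancel₀ hN, one_smul]

theorem cocycle_is_derivative {H : Type*} [AddCommGroup H] [Fintype H]
    {k d : ℕ} (hk : 1 ≤ k) (ρ : H → (Fin k → H) → (Fin d → ℤ))
    (hcocycle : ∀ (x : H) (h : Fin k → H) (i : Fin k) (u : H),
      ρ x h = ρ x (Function.update h i (h i + u)) - ρ (x + h i) (Function.update h i u)) :
    ∀ (x : H) (h : Fin k → H),
      cder (fun y j => (∑ t : Fin k → H, (ρ y t j : ℝ)) / (Fintype.card H : ℝ) ^ k) x h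
        = fun j => (ρ x h j : ℝ) :=
  cocycle_is_derivative_general ρ hcocycle
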